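/- arXiv:2507.10388 — 4 statements merged into one kernel-verified Lean document; each statement's English description precedes it below -/
import Mathlib

section
/- Let (𝒳, 𝒜, μ) be a probability space, w₀ ∈ (0, 1], and f₀, f₁ : 𝒳 → ℝ measurable functions with 0 ≤ f₀(x), 0 < f₁(x), and f₀(x) + f₁(x) ≤ 1 for μ-almost every x, such that (1 − f₀)²/f₁ is μ-integrable. Then ∫ [(1 − w₀)(1 − f₀(x)) + w₀ f₁(x)] · (1 − f₀(x))/f₁(x) dμ(x) ≥ ∫ (1 − f₀(x)) dμ(x). If in addition μ({x : f₀(x) + f₁(x) < 1}) > 0, then equality holds if and only if w₀ = 1. -/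
/-!
Where `f₁ > 0`, the integrand is the convex combination `(1 - w₀) c² / f₁ + w₀ c` with
`c = 1 - f₀ ≥ f₁`, and `c ≤ c² / f₁` with strict inequality exactly where `f₀ + f₁ < 1`.
So the integral is `(1 - w₀) H + w₀ K` with `K = ∫ c ≤ H = ∫ c² / f₁`, and `K < H` as soon as
`{f₀ + f₁ < 1}` has positive measure.
-/

open MeasureTheory

lemma le_sq_div_of_le {b c : ℝ} (hb : 0 < b) (hbc : b ≤ c) : c ≤ c ^ 2 / b := by
  rw [le_div_iff₀ hb]
  nlinarith

lemma lt_sq_div_of_lt {b c : ℝ} (hb : 0 < b) (hbc : b < c) : c < c ^ 2 / b := by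
  rw [lt_div_iff₀ hb]
  nlinarith

lemma le_one_sub_mul_add_mul {K H w : ℝ} (hKH : K ≤ H) (hw : w ≤ 1) :
    K ≤ (1 - w) * H + w * K := by
  nlinarith

lemma one_sub_mul_add_mul_eq_iff {K H w : ℝ} (hKH : K < H) :
    (1 - w) * H + w * K = K ↔ w = 1 := by
  constructor
  · intro h
    have : (1 - w) * (H - K) = 0 := by linarith
    linarith [(mul_eq_zero.mp this).resolve_right (sub_ne_zero.mpr hKH.ne')]
  · rintro rfl
    ring

theorem MeasureTheory.integral_lt_integral_of_ae_le_of_measure_setOf_lt_pos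
    {α : Type*} [MeasurableSpace α] {μ : Measure α} {f g : α → ℝ}
    (hf : Integrable f μ) (hg : Integrable g μ) (hfg : f ≤ᵐ[μ] g)
    (hlt : 0 < μ {x | f x < g x}) :
    ∫ x, f x ∂μ < ∫ x, g x ∂μ := by
  rw [← sub_pos, ← integral_sub hg hf, integral_pos_iff_support_of_nonneg_ae
    (hfg.mono fun _ hx => sub_nonneg.mpr hx) (hg.sub hf)]
  exact hlt.trans_le (measure_mono fun x hx => (sub_pos.mpr hx).ne')

lemma integral_mix_mul_div_eq {α : Type*} [MeasurableSpace α] {μ : Measure α} {b c : α → ℝ}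
    (w : ℝ) (hb : ∀ᵐ x ∂μ, b x ≠ 0) (hc : Integrable c μ)
    (hcb : Integrable (fun x => c x ^ 2 / b x) μ) :
    ∫ x, ((1 - w) * c x + w * b x) * c x / b x ∂μ =
      (1 - w) * ∫ x, c x ^ 2 / b x ∂μ + w * ∫ x, c x ∂μ := by
  rw [← integral_const_mul, ← integral_const_mul, ← integral_add (hcb.const_mul _) (hc.const_mul _)]
  refine integral_congr_ae (hb.mono fun x hx => ?_)
  field_simp

theorem expected_score_one_inflated_zero_truncated_general
    {𝒳 : Type*} [MeasurableSpace 𝒳] (μ : Measure 𝒳)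
    (w₀ : ℝ) (hw₀ : w₀ ∈ Set.Ioc (0 : ℝ) 1)
    (f₀ f₁ : 𝒳 → ℝ) (hf₀ : Measurable f₀)
    (hae : ∀ᵐ x ∂μ, 0 ≤ f₀ x ∧ 0 < f₁ x ∧ f₀ x + f₁ x ≤ 1)
    (hint : Integrable (fun x => (1 - f₀ x) ^ 2 / f₁ x) μ) :
    (∫ x, (1 - f₀ x) ∂μ) ≤
        ∫ x, ((1 - w₀) * (1 - f₀ x) + w₀ * f₁ x) * (1 - f₀ x) / f₁ x ∂μ ∧
      (0 < μ {x | f₀ x + f₁ x < 1} →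
        ((∫ x, ((1 - w₀) * (1 - f₀ x) + w₀ * f₁ x) * (1 - f₀ x) / f₁ x ∂μ) =
            ∫ x, (1 - f₀ x) ∂μ ↔ w₀ = 1)) := by
  have hle : ∀ᵐ x ∂μ, 1 - f₀ x ≤ (1 - f₀ x) ^ 2 / f₁ x :=
    hae.mono fun x hx => le_sq_div_of_le hx.2.1 (by linarith [hx.2.2])
  have hint₀ : Integrable (fun x => 1 - f₀ x) μ := by
    refine hint.mono' (measurable_const.sub hf₀).aestronglyMeasurable ?_
    filter_upwards [hae, hle] with x hx hxle
    rw [Real.norm_eq_abs, abs_of_nonneg (by linarith [hx.2.1, hx.2.2])]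
    exact hxle
  rw [integral_mix_mul_div_eq w₀ (hae.mono fun x hx => hx.2.1.ne') hint₀ hint]
  refine ⟨le_one_sub_mul_add_mul (integral_mono_ae hint₀ hint hle) hw₀.2, fun hpos => ?_⟩
  refine one_sub_mul_add_mul_eq_iff
    (integral_lt_integral_of_ae_le_of_measure_setOf_lt_pos hint₀ hint hle ?_)
  refine hpos.trans_le (measure_mono_ae ?_)
  filter_upwards [hae] with x hx hxlt
  exact lt_sq_div_of_lt hx.2.1 (by linarith [show f₀ x + f₁ x < 1 from hxlt])

/-- Theorem 4(b): the expected score for the one-inflation parameter in the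
one-inflated zero-truncated model is nonpositive, with equality iff `w₀ = 1`,
provided `μ {f₀ + f₁ < 1} > 0`. -/
theorem expected_score_one_inflated_zero_truncated
    {𝒳 : Type*} [MeasurableSpace 𝒳] (μ : Measure 𝒳) [IsProbabilityMeasure μ]
    (w₀ : ℝ) (hw₀ : w₀ ∈ Set.Ioc (0 : ℝ) 1)
    (f₀ f₁ : 𝒳 → ℝ) (hf₀ : Measurable f₀) (hf₁ : Measurable f₁)
    (hae : ∀ᵐ x ∂μ, 0 ≤ f₀ x ∧ 0 < f₁ x ∧ f₀ x + f₁ x ≤ 1)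
    (hint : Integrable (fun x => (1 - f₀ x) ^ 2 / f₁ x) μ) :
    (∫ x, (1 - f₀ x) ∂μ) ≤
        ∫ x, ((1 - w₀) * (1 - f₀ x) + w₀ * f₁ x) * (1 - f₀ x) / f₁ x ∂μ ∧
      (0 < μ {x | f₀ x + f₁ x < 1} →
        ((∫ x, ((1 - w₀) * (1 - f₀ x) + w₀ * f₁ x) * (1 - f₀ x) / f₁ x ∂μ) =
            ∫ x, (1 - f₀ x) ∂μ ↔ w₀ = 1)) :=
  expected_score_one_inflated_zero_truncated_general μ w₀ hw₀ f₀ f₁ hf₀ hae hint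
end

section
/- Fix an integer N ≥ n, β ∈ B, w ∈ (0, 1), and weights p = (p₁, …, pₙ) with each p_i > 0 and Σ_i p_i = 1. Assume that f(y_i, x_i; β′) > 0, f(0, x_i; β′) > 0 and f(1, x_i; β′) > 0 for all i = 1, …, n and all β′ ∈ B. Set α = w Σ_i f(0, x_i; β) p_i, v_i = w f(1, x_i; β)/(1 − w + w f(1, x_i; β)) if y_i = 1 and v_i = 1 otherwise, and u_i = (N − n) w f(0, x_i; β) p_i / α. Define the EM updates w⁺ = Σ_i (v_i + u_i) / Σ_i (1 + u_i), p_i⁺ = (u_i + 1)/Σ_j (u_j + 1), and let β⁺ ∈ B be any maximizer over B of ℓ₂(β′) = Σ_i [v_i log f(y_i, x_i; β′) + u_i log f(0, x_i; β′)]. Then L_N(β⁺, w⁺, p⁺) ≥ L_N(β, w, p); that is, one EM iteration with N held fixed does not decrease the log empirical likelihood. -/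
/-!
The usual EM argument. With `Q` the expected complete-data log-likelihood under the current
parameters, the log-sum inequality gives `L_N(θ') - L_N(θ) ≥ Q(θ') - Q(θ)` for every `θ'`:
apply it to each two-component mixture `h(yᵢ)` (drawn from `f` or from the point mass at 1)
and to `α`, a mixture over the covariate of an unseen unit. The M-step then maximizes `Q` term
by term: `β` by assumption, and `w` and `p` because normalized counts maximize `∑ cᵢ log qᵢ`
over the simplex (Gibbs' inequality).
-/

open Real Finset

namespace Real

theorem mul_log_sub_log_le_sub {a b : ℝ} (ha : 0 ≤ a) (hb : 0 < b) :
    a * (log b - log a) ≤ b - a := by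
  obtain rfl | ha := ha.eq_or_lt
  · simpa using hb.le
  have h := log_le_sub_one_of_pos (div_pos hb ha)
  rw [log_div hb.ne' ha.ne'] at h
  calc a * (log b - log a) ≤ a * (b / a - 1) := mul_le_mul_of_nonneg_left h ha.le
    _ = b - a := by field_simp

/-- The log-sum inequality. -/
theorem sum_mul_log_sub_log_le {ι : Type*} (s : Finset ι) {a b : ι → ℝ}
    (ha : ∀ i ∈ s, 0 ≤ a i) (hb : ∀ i ∈ s, 0 < b i) :
    ∑ i ∈ s, a i * (log (b i) - log (a i)) ≤
      (∑ i ∈ s, a i) * (log (∑ i ∈ s, b i) - log (∑ i ∈ s, a i)) := by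
  set A := ∑ i ∈ s, a i
  set B := ∑ i ∈ s, b i
  obtain hA | hA : 0 = A ∨ 0 < A := (sum_nonneg ha).eq_or_lt
  · have ha0 := (sum_eq_zero_iff_of_nonneg ha).1 hA.symm
    rw [← hA, zero_mul]
    exact (sum_eq_zero fun i hi => by rw [ha0 i hi, zero_mul]).le
  have hB : 0 < B := sum_pos hb (nonempty_of_sum_ne_zero hA.ne')
  -- apply the pointwise bound to `a i` and `b i` rescaled to total mass `A`
  have key : ∑ i ∈ s, a i * (log (A * b i / B) - log (a i)) ≤ 0 :=
    calc _ ≤ ∑ i ∈ s, (A * b i / B - a i) :=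
          sum_le_sum fun i hi => mul_log_sub_log_le_sub (ha i hi) (by have := hb i hi; positivity)
      _ = 0 := by
        rw [sum_sub_distrib, ← sum_div, ← mul_sum, mul_div_cancel_right₀ _ hB.ne', sub_self]
  have hlog : ∀ i ∈ s, a i * (log (A * b i / B) - log (a i)) =
      a i * (log (b i) - log (a i)) + a i * (log A - log B) := fun i hi => by
    rw [log_div (by have := hb i hi; positivity) hB.ne', log_mul hA.ne' (hb i hi).ne']
    ring
  rw [sum_congr rfl hlog, sum_add_distrib, ← sum_mul] at key
  linarith

theorem sum_div_sum_mul_log_sub_log_le {ι : Type*} (s : Finset ι) {a b : ι → ℝ}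
    (ha : ∀ i ∈ s, 0 ≤ a i) (hb : ∀ i ∈ s, 0 < b i) (hA : 0 < ∑ i ∈ s, a i) :
    ∑ i ∈ s, a i / (∑ j ∈ s, a j) * (log (b i) - log (a i)) ≤
      log (∑ i ∈ s, b i) - log (∑ i ∈ s, a i) := by
  simp_rw [div_mul_eq_mul_div, ← sum_div]
  rw [div_le_iff₀ hA, mul_comm]
  exact sum_mul_log_sub_log_le s ha hb

theorem sum_mul_log_le_sum_mul_log_div_sum {ι : Type*} (s : Finset ι) {c q : ι → ℝ}
    (hc : ∀ i ∈ s, 0 ≤ c i) (hq : ∀ i ∈ s, 0 < q i) (hq1 : ∑ i ∈ s, q i ≤ 1) :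
    ∑ i ∈ s, c i * log (q i) ≤ ∑ i ∈ s, c i * log (c i / ∑ j ∈ s, c j) := by
  set C := ∑ j ∈ s, c j
  have hsplit : ∀ i ∈ s, c i * log (c i / C) = c i * log (c i) - c i * log C := fun i hi => by
    obtain h | h := (hc i hi).eq_or_lt
    · simp [← h]
    · rw [log_div h.ne' (h.trans_le (single_le_sum hc hi)).ne']
      ring
  have hQ : C * log (∑ i ∈ s, q i) ≤ 0 :=
    mul_nonpos_of_nonneg_of_nonpos (sum_nonneg hc)
      (log_nonpos (sum_nonneg fun i hi => (hq i hi).le) hq1)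
  have := sum_mul_log_sub_log_le s hc hq
  simp only [mul_sub, sum_sub_distrib] at this
  rw [sum_congr rfl hsplit, sum_sub_distrib, ← sum_mul]
  linarith

theorem mul_log_add_mul_log_one_sub_le {a b w : ℝ} (ha : 0 ≤ a) (hb : 0 ≤ b)
    (hw : w ∈ Set.Ioo 0 1) :
    a * log w + b * log (1 - w) ≤ a * log (a / (a + b)) + b * log (1 - a / (a + b)) := by
  have h := sum_mul_log_le_sum_mul_log_div_sum univ (c := ![a, b]) (q := ![w, 1 - w])
    (by simp [Fin.forall_fin_two, ha, hb]) (by simp [Fin.forall_fin_two, hw.1, hw.2])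
    (by simp)
  simp only [Fin.sum_univ_two, Matrix.cons_val_zero, Matrix.cons_val_one] at h
  obtain rfl | hb := hb.eq_or_lt
  · simpa using h
  rwa [one_sub_div (by positivity), add_sub_cancel_left]

end Real

theorem sum_add_div_sum_one_add_lt_one {ι : Type*} {s : Finset ι} {v u : ι → ℝ}
    (hv : ∀ i ∈ s, v i ≤ 1) (hu : ∀ i ∈ s, 0 ≤ u i) {j : ι} (hj : j ∈ s) (hvj : v j < 1) :
    (∑ i ∈ s, (v i + u i)) / ∑ i ∈ s, (1 + u i) < 1 := by
  have hmass : 0 < ∑ i ∈ s, (1 + u i) := sum_pos' (fun i hi => by linarith [hu i hi])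
    ⟨j, hj, by linarith [hu j hj]⟩
  rw [div_lt_one hmass]
  exact sum_lt_sum (fun i hi => by linarith [hv i hi]) ⟨j, hj, by linarith⟩

namespace OneInflated

theorem posterior_mem_Ioc {y : ℕ} {w F v : ℝ} (hw : w ∈ Set.Ioo 0 1) (hF : y = 1 → 0 < F)
    (hv : v = if y = 1 then w * F / (1 - w + w * F) else 1) :
    v ∈ Set.Ioc 0 1 ∧ (y = 1 → v < 1) := by
  obtain ⟨hw0, hw1⟩ := hw
  split_ifs at hv with hy
  · have hF := hF hy
    have hden : 0 < 1 - w + w * F := by nlinarith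
    have hlt : v < 1 := hv ▸ (div_lt_one hden).2 (by linarith)
    exact ⟨⟨hv ▸ by positivity, hlt.le⟩, fun _ => hlt⟩
  · exact ⟨⟨hv ▸ one_pos, hv.le⟩, fun h => absurd h hy⟩

theorem posterior_mul_log_ratio_le_log_ratio {y : ℕ} {w w' F F' v : ℝ}
    (hw : w ∈ Set.Ioo 0 1) (hw'0 : 0 < w') (hw'1 : y = 1 → w' < 1) (hF : 0 < F) (hF' : 0 < F')
    (hv : v = if y = 1 then w * F / (1 - w + w * F) else 1) :
    v * (log w' + log F' - (log w + log F)) + (1 - v) * (log (1 - w') - log (1 - w)) ≤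
      log (w' * F' + (1 - w') * if y = 1 then 1 else 0) -
        log (w * F + (1 - w) * if y = 1 then 1 else 0) := by
  obtain ⟨hw0, hw1⟩ := hw
  by_cases hy : y = 1
  · simp only [hy, if_true, mul_one] at hv ⊢
    have h1w := sub_pos.2 hw1
    have h1w' := sub_pos.2 (hw'1 hy)
    have h := sum_div_sum_mul_log_sub_log_le univ (a := ![w * F, 1 - w])
      (b := ![w' * F', 1 - w'])
      (fun i _ => by fin_cases i <;> simp <;> first | positivity | linarith)
      (fun i _ => by fin_cases i <;> simp <;> first | positivity | linarith)
      (by simp; positivity)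
    simp only [Fin.sum_univ_two, Matrix.cons_val_zero, Matrix.cons_val_one] at h
    have hv' : 1 - v = (1 - w) / (w * F + (1 - w)) := by
      rw [hv]
      field_simp
      ring
    rwa [hv', hv, add_comm (1 - w), ← log_mul hw'0.ne' hF'.ne', ← log_mul hw0.ne' hF.ne']
  · simp only [hy, if_false, mul_zero, add_zero] at hv ⊢
    rw [hv, log_mul hw'0.ne' hF'.ne', log_mul hw0.ne' hF.ne']
    linarith

variable {𝒳 B : Type*} {n : ℕ} (x : Fin n → 𝒳) (y : Fin n → ℕ) (f : ℕ → 𝒳 → B → ℝ)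

noncomputable def logEmpLik (N : ℕ) (β : B) (w : ℝ) (p : Fin n → ℝ) : ℝ :=
  log (N.choose n : ℝ) + ((N : ℝ) - n) * log (w * ∑ i, f 0 (x i) β * p i) +
    (∑ i, log (w * f (y i) (x i) β + (1 - w) * (if y i = 1 then 1 else 0))) + ∑ i, log (p i)

/-- `v i` is the posterior probability that observation `i` was drawn from `f` rather than from
the point mass at 1, and `u i` the expected number of unobserved units with covariate `x i`. -/
noncomputable def expectedCompleteLogLik (v u : Fin n → ℝ) (β : B) (w : ℝ) (p : Fin n → ℝ) :
    ℝ :=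
  (∑ i, (v i * log (f (y i) (x i) β) + u i * log (f 0 (x i) β))) +
    ((∑ i, (v i + u i)) * log w + (∑ i, (1 - v i)) * log (1 - w)) +
    ∑ i, (u i + 1) * log (p i)

variable {x y f}

theorem expectedCompleteLogLik_le_of_update {v u : Fin n → ℝ} {β β' : B} {w w' : ℝ}
    {p p' : Fin n → ℝ} (hv0 : ∀ i, 0 ≤ v i) (hv1 : ∀ i, v i ≤ 1) (hu : ∀ i, 0 ≤ u i)
    (hw : w ∈ Set.Ioo 0 1) (hp : ∀ i, 0 < p i) (hp1 : ∑ i, p i = 1)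
    (hβ' : ∑ i, (v i * log (f (y i) (x i) β) + u i * log (f 0 (x i) β)) ≤
      ∑ i, (v i * log (f (y i) (x i) β') + u i * log (f 0 (x i) β')))
    (hw' : w' = (∑ i, (v i + u i)) / ∑ i, (1 + u i))
    (hp' : ∀ i, p' i = (u i + 1) / ∑ j, (u j + 1)) :
    expectedCompleteLogLik x y f v u β w p ≤ expectedCompleteLogLik x y f v u β' w' p' := by
  have hsum : ∑ i, (1 + u i) = (∑ i, (v i + u i)) + ∑ i, (1 - v i) := by
    rw [← sum_add_distrib]
    exact sum_congr rfl fun i _ => by ring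
  have hw_step : (∑ i, (v i + u i)) * log w + (∑ i, (1 - v i)) * log (1 - w) ≤
      (∑ i, (v i + u i)) * log w' + (∑ i, (1 - v i)) * log (1 - w') := by
    rw [hw', hsum]
    exact mul_log_add_mul_log_one_sub_le (sum_nonneg fun i _ => add_nonneg (hv0 i) (hu i))
      (sum_nonneg fun i _ => sub_nonneg.2 (hv1 i)) hw
  have hp_step : ∑ i, (u i + 1) * log (p i) ≤ ∑ i, (u i + 1) * log (p' i) := by
    simp only [hp']
    exact sum_mul_log_le_sum_mul_log_div_sum univ (fun i _ => by linarith [hu i])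
      (fun i _ => hp i) hp1.le
  exact add_le_add (add_le_add hβ' hw_step) hp_step

theorem sum_mul_log_ratio_le_mul_log_ratio_of_missing {N : ℕ} {u : Fin n → ℝ} {β β' : B}
    {w w' : ℝ} {p p' : Fin n → ℝ} (hne : (univ : Finset (Fin n)).Nonempty) (hN : n ≤ N)
    (hw0 : 0 < w) (hw'0 : 0 < w') (hp : ∀ i, 0 < p i) (hp' : ∀ i, 0 < p' i)
    (hf0 : ∀ i, 0 < f 0 (x i) β) (hf0' : ∀ i, 0 < f 0 (x i) β')
    (hu : ∀ i, u i = ((N : ℝ) - n) * w * f 0 (x i) β * p i / (w * ∑ j, f 0 (x j) β * p j)) :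
    ∑ i, u i * ((log w' + log (f 0 (x i) β') + log (p' i)) -
        (log w + log (f 0 (x i) β) + log (p i))) ≤
      ((N : ℝ) - n) *
        (log (w' * ∑ i, f 0 (x i) β' * p' i) - log (w * ∑ i, f 0 (x i) β * p i)) := by
  have ha : ∀ i, 0 < w * (f 0 (x i) β * p i) := fun i => mul_pos hw0 (mul_pos (hf0 i) (hp i))
  have hb : ∀ i, 0 < w' * (f 0 (x i) β' * p' i) := fun i =>
    mul_pos hw'0 (mul_pos (hf0' i) (hp' i))
  have h := sum_div_sum_mul_log_sub_log_le univ (fun i _ => (ha i).le) (fun i _ => hb i)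
    (sum_pos (fun i _ => ha i) hne)
  simp only [← mul_sum] at h
  calc _ = ((N : ℝ) - n) * ∑ i, w * (f 0 (x i) β * p i) / (w * ∑ j, f 0 (x j) β * p j) *
          (log (w' * (f 0 (x i) β' * p' i)) - log (w * (f 0 (x i) β * p i))) := by
        rw [mul_sum]
        refine sum_congr rfl fun i _ => ?_
        rw [hu i, log_mul hw'0.ne' (mul_pos (hf0' i) (hp' i)).ne',
          log_mul (hf0' i).ne' (hp' i).ne', log_mul hw0.ne' (mul_pos (hf0 i) (hp i)).ne',
          log_mul (hf0 i).ne' (hp i).ne']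
        ring
    _ ≤ _ := mul_le_mul_of_nonneg_left h (sub_nonneg.2 (by exact_mod_cast hN))

theorem expectedCompleteLogLik_sub_le_logEmpLik_sub {N : ℕ} {v u : Fin n → ℝ} {β β' : B}
    {w w' : ℝ} {p p' : Fin n → ℝ} (hne : (univ : Finset (Fin n)).Nonempty) (hN : n ≤ N)
    (hw : w ∈ Set.Ioo 0 1) (hp : ∀ i, 0 < p i)
    (hfy : ∀ i, 0 < f (y i) (x i) β) (hf0 : ∀ i, 0 < f 0 (x i) β)
    (hfy' : ∀ i, 0 < f (y i) (x i) β') (hf0' : ∀ i, 0 < f 0 (x i) β')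
    (hv : ∀ i, v i = if y i = 1 then w * f 1 (x i) β / (1 - w + w * f 1 (x i) β) else 1)
    (hu : ∀ i, u i = ((N : ℝ) - n) * w * f 0 (x i) β * p i / (w * ∑ j, f 0 (x j) β * p j))
    (hw'0 : 0 < w') (hw'1 : ∀ i, y i = 1 → w' < 1) (hp' : ∀ i, 0 < p' i) :
    expectedCompleteLogLik x y f v u β' w' p' - expectedCompleteLogLik x y f v u β w p ≤
      logEmpLik x y f N β' w' p' - logEmpLik x y f N β w p := by
  have hobs : ∑ i, (v i * (log w' + log (f (y i) (x i) β') - (log w + log (f (y i) (x i) β))) +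
        (1 - v i) * (log (1 - w') - log (1 - w))) ≤
      ∑ i, (log (w' * f (y i) (x i) β' + (1 - w') * (if y i = 1 then 1 else 0)) -
        log (w * f (y i) (x i) β + (1 - w) * (if y i = 1 then 1 else 0))) :=
    sum_le_sum fun i _ => posterior_mul_log_ratio_le_log_ratio hw hw'0 (hw'1 i) (hfy i) (hfy' i)
      (by rw [hv i]; split_ifs with h <;> simp [h])
  have hmiss := sum_mul_log_ratio_le_mul_log_ratio_of_missing hne hN hw.1 hw'0 hp hp' hf0 hf0' hu
  have hQ : expectedCompleteLogLik x y f v u β' w' p' - expectedCompleteLogLik x y f v u β w p =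
      ∑ i, (v i * (log w' + log (f (y i) (x i) β') - (log w + log (f (y i) (x i) β))) +
        (1 - v i) * (log (1 - w') - log (1 - w))) +
      ∑ i, u i * ((log w' + log (f 0 (x i) β') + log (p' i)) -
        (log w + log (f 0 (x i) β) + log (p i))) + ∑ i, (log (p' i) - log (p i)) := by
    unfold expectedCompleteLogLik
    simp only [sum_mul, ← sum_add_distrib, ← sum_sub_distrib]
    exact sum_congr rfl fun i _ => by ring
  have hL : logEmpLik x y f N β' w' p' - logEmpLik x y f N β w p =
      ∑ i, (log (w' * f (y i) (x i) β' + (1 - w') * (if y i = 1 then 1 else 0)) -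
        log (w * f (y i) (x i) β + (1 - w) * (if y i = 1 then 1 else 0))) +
      ((N : ℝ) - n) *
        (log (w' * ∑ i, f 0 (x i) β' * p' i) - log (w * ∑ i, f 0 (x i) β * p i)) +
      ∑ i, (log (p' i) - log (p i)) := by
    unfold logEmpLik
    rw [sum_sub_distrib, sum_sub_distrib]
    ring
  linarith

end OneInflated

open OneInflated in
theorem em_step_monotone_fixed_N_general
    {𝒳 B : Type*} (n : ℕ) (x : Fin n → 𝒳) (y : Fin n → ℕ)
    (f : ℕ → 𝒳 → B → ℝ)
    (N : ℕ) (hN : n ≤ N)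
    (β : B) (w : ℝ) (hw : w ∈ Set.Ioo (0 : ℝ) 1)
    (p : Fin n → ℝ) (hp : ∀ i, 0 < p i) (hp1 : ∑ i, p i = 1)
    (hfy : ∀ (i : Fin n) (b : B), 0 < f (y i) (x i) b)
    (hf0 : ∀ (i : Fin n) (b : B), 0 < f 0 (x i) b)
    (α : ℝ) (hα : α = w * ∑ i, f 0 (x i) β * p i)
    (v : Fin n → ℝ)
    (hv : ∀ i, v i =
      if y i = 1 then w * f 1 (x i) β / (1 - w + w * f 1 (x i) β) else 1)
    (u : Fin n → ℝ)
    (hu : ∀ i, u i = ((N : ℝ) - n) * w * f 0 (x i) β * p i / α)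
    (w' : ℝ) (hw' : w' = (∑ i, (v i + u i)) / (∑ i, (1 + u i)))
    (p' : Fin n → ℝ) (hp' : ∀ i, p' i = (u i + 1) / ∑ j, (u j + 1))
    (β' : B)
    (hβ' : ∀ b : B,
      (∑ i, (v i * Real.log (f (y i) (x i) b) + u i * Real.log (f 0 (x i) b))) ≤
        ∑ i, (v i * Real.log (f (y i) (x i) β') + u i * Real.log (f 0 (x i) β'))) :
    Real.log (N.choose n : ℝ) + ((N : ℝ) - n) * Real.log α +
        (∑ i, Real.log (w * f (y i) (x i) β + (1 - w) * (if y i = 1 then 1 else 0))) +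
        (∑ i, Real.log (p i)) ≤
      Real.log (N.choose n : ℝ) +
        ((N : ℝ) - n) * Real.log (w' * ∑ i, f 0 (x i) β' * p' i) +
        (∑ i, Real.log (w' * f (y i) (x i) β' + (1 - w') * (if y i = 1 then 1 else 0))) +
        (∑ i, Real.log (p' i)) := by
  subst hα
  have hne : (univ : Finset (Fin n)).Nonempty :=
    univ_nonempty_iff.2 ⟨⟨0, Nat.pos_of_ne_zero (by rintro rfl; simp at hp1)⟩⟩
  have hα : 0 < w * ∑ i, f 0 (x i) β * p i :=
    mul_pos hw.1 (sum_pos (fun i _ => mul_pos (hf0 i β) (hp i)) hne)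
  have hv01 (i : Fin n) : v i ∈ Set.Ioc 0 1 ∧ (y i = 1 → v i < 1) :=
    posterior_mem_Ioc hw (fun h => h ▸ hfy i β) (hv i)
  have hu0 (i : Fin n) : 0 ≤ u i := hu i ▸ div_nonneg (mul_nonneg (mul_nonneg (mul_nonneg
    (sub_nonneg.2 (by exact_mod_cast hN)) hw.1.le) (hf0 i β).le) (hp i).le) hα.le
  have hmass : 0 < ∑ i, (u i + 1) := sum_pos (fun i _ => by linarith [hu0 i]) hne
  have hw'0 : 0 < w' := hw' ▸ div_pos
    (sum_pos (fun i _ => by linarith [hu0 i, (hv01 i).1.1]) hne)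
    (sum_pos (fun i _ => by linarith [hu0 i]) hne)
  have hw'1 (i : Fin n) (hi : y i = 1) : w' < 1 := hw' ▸ sum_add_div_sum_one_add_lt_one
    (fun j _ => (hv01 j).1.2) (fun j _ => hu0 j) (mem_univ i) ((hv01 i).2 hi)
  have hp'0 (i : Fin n) : 0 < p' i := hp' i ▸ div_pos (by linarith [hu0 i]) hmass
  have hM := expectedCompleteLogLik_le_of_update (fun i => (hv01 i).1.1.le)
    (fun i => (hv01 i).1.2) hu0 hw hp hp1 (hβ' β) hw' hp'
  have hmin := expectedCompleteLogLik_sub_le_logEmpLik_sub hne hN hw hp (hfy · β) (hf0 · β)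
    (hfy · β') (hf0 · β') hv hu hw'0 hw'1 hp'0
  exact (show logEmpLik x y f N β w p ≤ logEmpLik x y f N β' w' p' by linarith)

/-- Theorem 1(a): one EM iteration with the population size `N` held fixed does not
decrease the log empirical likelihood
`L_N(β, w, p) = log C(N, n) + (N − n) log α(β, w, p)
  + Σᵢ log h(yᵢ, xᵢ; β, w) + Σᵢ log pᵢ`,
where `h(y, x; β, w) = w f(y, x; β) + (1 − w)·1{y = 1}` and
`α(β, w, p) = w Σᵢ f(0, xᵢ; β) pᵢ`. -/
theorem em_step_monotone_fixed_N
    {𝒳 B : Type*} (n : ℕ) (x : Fin n → 𝒳) (y : Fin n → ℕ) (hy : ∀ i, 1 ≤ y i)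
    (f : ℕ → 𝒳 → B → ℝ)
    (hf_nonneg : ∀ (k : ℕ) (ξ : 𝒳) (b : B), 0 ≤ f k ξ b)
    (hf_pmf : ∀ (ξ : 𝒳) (b : B), ∑' k : ℕ, f k ξ b = 1)
    (N : ℕ) (hN : n ≤ N)
    (β : B) (w : ℝ) (hw : w ∈ Set.Ioo (0 : ℝ) 1)
    (p : Fin n → ℝ) (hp : ∀ i, 0 < p i) (hp1 : ∑ i, p i = 1)
    (hfy : ∀ (i : Fin n) (b : B), 0 < f (y i) (x i) b)
    (hf0 : ∀ (i : Fin n) (b : B), 0 < f 0 (x i) b)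
    (hf1 : ∀ (i : Fin n) (b : B), 0 < f 1 (x i) b)
    (α : ℝ) (hα : α = w * ∑ i, f 0 (x i) β * p i)
    (v : Fin n → ℝ)
    (hv : ∀ i, v i =
      if y i = 1 then w * f 1 (x i) β / (1 - w + w * f 1 (x i) β) else 1)
    (u : Fin n → ℝ)
    (hu : ∀ i, u i = ((N : ℝ) - n) * w * f 0 (x i) β * p i / α)
    (w' : ℝ) (hw' : w' = (∑ i, (v i + u i)) / (∑ i, (1 + u i)))
    (p' : Fin n → ℝ) (hp' : ∀ i, p' i = (u i + 1) / ∑ j, (u j + 1))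
    (β' : B)
    (hβ' : ∀ b : B,
      (∑ i, (v i * Real.log (f (y i) (x i) b) + u i * Real.log (f 0 (x i) b))) ≤
        ∑ i, (v i * Real.log (f (y i) (x i) β') + u i * Real.log (f 0 (x i) β'))) :
    Real.log (N.choose n : ℝ) + ((N : ℝ) - n) * Real.log α +
        (∑ i, Real.log (w * f (y i) (x i) β + (1 - w) * (if y i = 1 then 1 else 0))) +
        (∑ i, Real.log (p i)) ≤
      Real.log (N.choose n : ℝ) +
        ((N : ℝ) - n) * Real.log (w' * ∑ i, f 0 (x i) β' * p' i) +
        (∑ i, Real.log (w' * f (y i) (x i) β' + (1 - w') * (if y i = 1 then 1 else 0))) +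
        (∑ i, Real.log (p' i)) :=
  em_step_monotone_fixed_N_general n x y f N hN β w hw p hp hp1 hfy hf0 α hα v hv u hu w' hw' p' hp'
    β' hβ'
end

section
/- Let n ≥ 1, let g₁, …, gₙ and α be real numbers, and suppose ξ ∈ ℝ satisfies 1 + ξ(g_i − α) > 0 for all i and Σ_{i=1}^n (g_i − α)/(1 + ξ(g_i − α)) = 0. Define p*_i = n⁻¹ (1 + ξ(g_i − α))⁻¹. Then p*_i > 0 for all i, Σ_i p*_i = 1, Σ_i (g_i − α) p*_i = 0, and for every p = (p₁, …, pₙ) with p_i > 0, Σ_i p_i = 1 and Σ_i (g_i − α) p_i = 0, one has Σ_i log p_i ≤ Σ_i log p*_i. -/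
/-! `log x ≤ x - 1` applied to `pᵢ / p*ᵢ` bounds `Σ log pᵢ - Σ log p*ᵢ` by `Σ pᵢ / p*ᵢ - n`.
Since `pᵢ / p*ᵢ = n pᵢ (1 + ξ(gᵢ - α))`, the two constraints on `p` make `Σ pᵢ / p*ᵢ = n`. -/

section

variable {ι : Type*} [Fintype ι]

theorem Real.sum_log_le_sum_log_of_sum_div_le_card {p q : ι → ℝ} (hp : ∀ i, 0 < p i)
    (hq : ∀ i, 0 < q i) (hpq : ∑ i, p i / q i ≤ Fintype.card ι) :
    ∑ i, Real.log (p i) ≤ ∑ i, Real.log (q i) := by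
  have hlog : ∀ i, Real.log (p i) - Real.log (q i) ≤ p i / q i - 1 := fun i => by
    rw [← Real.log_div (hp i).ne' (hq i).ne']
    exact Real.log_le_sub_one_of_pos (div_pos (hp i) (hq i))
  have hsum := Finset.sum_le_sum fun i (_ : i ∈ Finset.univ) => hlog i
  simp only [Finset.sum_sub_distrib, Finset.sum_const, Finset.card_univ, nsmul_eq_mul,
    mul_one] at hsum
  linarith

theorem sum_inv_one_add_mul_eq_card {h : ι → ℝ} {ξ : ℝ} (hne : ∀ i, 1 + ξ * h i ≠ 0)
    (hξ : ∑ i, h i / (1 + ξ * h i) = 0) : ∑ i, (1 + ξ * h i)⁻¹ = Fintype.card ι := by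
  have hinv : ∀ i, (1 + ξ * h i)⁻¹ = 1 - ξ * (h i / (1 + ξ * h i)) := fun i => by
    field_simp [hne i]
    ring
  simp only [hinv, Finset.sum_sub_distrib, ← Finset.mul_sum, hξ, mul_zero, sub_zero,
    Finset.sum_const, Finset.card_univ, nsmul_eq_mul, mul_one]

end

/-- The empirical-likelihood profiling step: the weights
`p*ᵢ = n⁻¹ (1 + ξ(gᵢ − α))⁻¹`, with `ξ` the Lagrange multiplier, form a probability
vector satisfying the structural constraint, and they maximize `Σᵢ log pᵢ` among all
probability vectors satisfying the constraint. -/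
theorem el_profiling_step (n : ℕ) (hn : 1 ≤ n) (g : Fin n → ℝ) (α ξ : ℝ)
    (hpos : ∀ i, 0 < 1 + ξ * (g i - α))
    (hξ : ∑ i, (g i - α) / (1 + ξ * (g i - α)) = 0)
    (pstar : Fin n → ℝ)
    (hpstar : ∀ i, pstar i = (n : ℝ)⁻¹ * (1 + ξ * (g i - α))⁻¹) :
    (∀ i, 0 < pstar i) ∧ (∑ i, pstar i = 1) ∧
      (∑ i, (g i - α) * pstar i = 0) ∧
      ∀ p : Fin n → ℝ, (∀ i, 0 < p i) → (∑ i, p i = 1) →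
        (∑ i, (g i - α) * p i = 0) →
        (∑ i, Real.log (p i)) ≤ ∑ i, Real.log (pstar i) := by
  have hn₀ : (n : ℝ) ≠ 0 := by positivity
  have hne : ∀ i, 1 + ξ * (g i - α) ≠ 0 := fun i => (hpos i).ne'
  have hpstar_pos : ∀ i, 0 < pstar i := fun i => by
    rw [hpstar i]
    exact mul_pos (by positivity) (inv_pos.mpr (hpos i))
  refine ⟨hpstar_pos, ?_, ?_, fun p hp hp_one hp_zero => ?_⟩
  · simp only [hpstar, ← Finset.mul_sum, sum_inv_one_add_mul_eq_card hne hξ, Fintype.card_fin,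
      inv_mul_cancel₀ hn₀]
  · have hterm : ∀ i, (g i - α) * pstar i = (n : ℝ)⁻¹ * ((g i - α) / (1 + ξ * (g i - α))) :=
      fun i => by rw [hpstar i]; ring
    simp only [hterm, ← Finset.mul_sum, hξ, mul_zero]
  · refine Real.sum_log_le_sum_log_of_sum_div_le_card hp hpstar_pos (le_of_eq ?_)
    have hratio : ∀ i, p i / pstar i = n * (p i + ξ * ((g i - α) * p i)) := fun i => by
      rw [hpstar i]
      field_simp [hne i]
    simp only [hratio, ← Finset.mul_sum, Finset.sum_add_distrib, hp_one, hp_zero, mul_zero,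
      add_zero, mul_one, Fintype.card_fin]
end

section
/- Fix data x₁, …, xₙ ∈ 𝒳 and counts y₁, …, yₙ with y_i ≥ 1. Let N ≥ n be an integer, β ∈ B, w ∈ (0, 1], and p = (p₁, …, pₙ) with p_i > 0 and Σ_i p_i = 1. Assume 0 < f(0, x_i; β) < 1 and h(y_i, x_i; β, w) > 0 for all i, and set α = w Σ_i f(0, x_i; β) p_i. Then log C(N, n) + (N − n) log α + Σ_{i=1}^n log h(y_i, x_i; β, w) + Σ_{i=1}^n log p_i ≤ −n log n; in particular the log empirical likelihood is bounded above by 0. -/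
/-!
For `yᵢ ≥ 1` the one-inflated mass satisfies `hᵢ ≤ 1 - w f(0, xᵢ)`, so `hᵢ pᵢ ≤ aᵢ := (1 - w f(0, xᵢ)) pᵢ`,
and `∑ aᵢ = 1 - α`. By AM–GM, `∑ log aᵢ ≤ n log ((1 - α) / n)`, and the remaining
`C(N, n) α^(N-n) (1 - α)^n` is a single term of the binomial expansion of `(α + (1 - α))^N = 1`.
-/

open Finset Real

lemma add_le_one_of_tsum_eq_one {f : ℕ → ℝ} (hf : ∀ k, 0 ≤ f k) (hf1 : ∑' k, f k = 1)
    {j k : ℕ} (hjk : j ≠ k) : f j + f k ≤ 1 := by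
  have hsum : Summable f := by
    by_contra h
    simp [tsum_eq_zero_of_not_summable h] at hf1
  rw [← hf1, ← sum_pair hjk]
  exact hsum.sum_le_tsum _ fun i _ ↦ hf i

lemma oneInflated_le_one_sub {f : ℕ → ℝ} (hf : ∀ k, 0 ≤ f k) (hf1 : ∑' k, f k = 1)
    {y : ℕ} (hy : y ≠ 0) {w : ℝ} (hw0 : 0 ≤ w) (hw1 : w ≤ 1) :
    w * f y + (1 - w) * (if y = 1 then 1 else 0) ≤ 1 - w * f 0 := by
  have hfy : f y + f 0 ≤ 1 := add_le_one_of_tsum_eq_one hf hf1 hy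
  have hind : (1 - w) * (if y = 1 then 1 else 0) ≤ 1 - w := by
    split_ifs <;> linarith
  nlinarith

lemma Real.sum_log_le_card_mul_log_mean {ι : Type*} (s : Finset ι) {a : ι → ℝ}
    (ha : ∀ i ∈ s, 0 < a i) :
    ∑ i ∈ s, log (a i) ≤ #s * log ((∑ i ∈ s, a i) / #s) := by
  rcases s.eq_empty_or_nonempty with rfl | hs
  · simp
  have hcard : (0 : ℝ) < #s := by exact_mod_cast hs.card_pos
  have hjensen := strictConcaveOn_log_Ioi.concaveOn.le_map_sum (t := s)
    (w := fun _ ↦ (#s : ℝ)⁻¹) (p := a) (fun _ _ ↦ by positivity) (by simp [hcard.ne']) ha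
  simp only [smul_eq_mul, ← mul_sum] at hjensen
  rw [div_eq_inv_mul, ← div_le_iff₀' hcard, div_eq_inv_mul]
  exact hjensen

lemma choose_mul_pow_mul_pow_le_one {a b : ℝ} (ha : 0 ≤ a) (hb : 0 ≤ b) (hab : a + b = 1)
    {n N : ℕ} (hn : n ≤ N) : N.choose n * a ^ (N - n) * b ^ n ≤ 1 := by
  have hexp := add_pow b a N
  rw [add_comm, hab, one_pow] at hexp
  calc (N.choose n : ℝ) * a ^ (N - n) * b ^ n = b ^ n * a ^ (N - n) * N.choose n := by ring
    _ ≤ ∑ m ∈ range (N + 1), b ^ m * a ^ (N - m) * N.choose m :=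
      single_le_sum (f := fun m ↦ b ^ m * a ^ (N - m) * (N.choose m : ℝ))
        (fun m _ ↦ by positivity) (mem_range.2 (by omega))
    _ = 1 := hexp.symm

lemma log_choose_add_mul_log_add_mul_log_one_sub_le {α : ℝ} (h0 : 0 < α) (h1 : α < 1)
    {n N : ℕ} (hn : n ≤ N) :
    log (N.choose n) + ((N : ℝ) - n) * log α + n * log (1 - α) ≤ 0 := by
  have hC : (0 : ℝ) < N.choose n := by exact_mod_cast Nat.choose_pos hn
  have h1α : 0 < 1 - α := by linarith
  rw [← Nat.cast_sub hn, ← log_pow, ← log_pow, ← log_mul hC.ne' (by positivity),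
    ← log_mul (by positivity) (by positivity)]
  exact log_nonpos (by positivity)
    (choose_mul_pow_mul_pow_le_one h0.le h1α.le (by ring) hn)

/-- The log empirical likelihood (5) of the paper is bounded above by `−n log n`,
and in particular by `0`. Here `h(y, x; β, w) = w f(y, x; β) + (1 − w)·1{y = 1}` and
`α = w Σᵢ f(0, xᵢ; β) pᵢ`. -/
theorem log_EL_upper_bound
    {𝒳 B : Type*} (n : ℕ) (x : Fin n → 𝒳) (y : Fin n → ℕ) (hy : ∀ i, 1 ≤ y i)
    (f : ℕ → 𝒳 → B → ℝ)
    (hf_nonneg : ∀ (k : ℕ) (ξ : 𝒳) (b : B), 0 ≤ f k ξ b)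
    (hf_pmf : ∀ (ξ : 𝒳) (b : B), ∑' k : ℕ, f k ξ b = 1)
    (N : ℕ) (hN : n ≤ N)
    (β : B) (w : ℝ) (hw : w ∈ Set.Ioc (0 : ℝ) 1)
    (p : Fin n → ℝ) (hp : ∀ i, 0 < p i) (hp1 : ∑ i, p i = 1)
    (hf0 : ∀ i : Fin n, f 0 (x i) β ∈ Set.Ioo (0 : ℝ) 1)
    (hh : ∀ i : Fin n,
      0 < w * f (y i) (x i) β + (1 - w) * (if y i = 1 then 1 else 0))
    (α : ℝ) (hα : α = w * ∑ i, f 0 (x i) β * p i) :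
    Real.log (N.choose n : ℝ) + ((N : ℝ) - n) * Real.log α +
        (∑ i, Real.log (w * f (y i) (x i) β + (1 - w) * (if y i = 1 then 1 else 0))) +
        (∑ i, Real.log (p i)) ≤ -(n : ℝ) * Real.log n ∧
      Real.log (N.choose n : ℝ) + ((N : ℝ) - n) * Real.log α +
        (∑ i, Real.log (w * f (y i) (x i) β + (1 - w) * (if y i = 1 then 1 else 0))) +
        (∑ i, Real.log (p i)) ≤ 0 := by
  obtain ⟨hw0, hw1⟩ := hw
  rcases Nat.eq_zero_or_pos n with rfl | hn
  · simp [hα]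
  have : Nonempty (Fin n) := ⟨⟨0, hn⟩⟩
  set h : Fin n → ℝ := fun i ↦ w * f (y i) (x i) β + (1 - w) * (if y i = 1 then 1 else 0)
  set a : Fin n → ℝ := fun i ↦ (1 - w * f 0 (x i) β) * p i
  have hh_le (i : Fin n) : h i ≤ 1 - w * f 0 (x i) β :=
    oneInflated_le_one_sub (hf_nonneg · (x i) β) (hf_pmf (x i) β) (by have := hy i; omega)
      hw0.le hw1
  have ha_pos (i : Fin n) : 0 < a i := mul_pos ((hh i).trans_le (hh_le i)) (hp i)
  have hsum_a : ∑ i, a i = 1 - α := by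
    simp only [a, sub_mul, one_mul, sum_sub_distrib, hp1, hα, mul_sum, mul_assoc]
  have hα_pos : 0 < α :=
    hα ▸ mul_pos hw0 (sum_pos (fun i _ ↦ mul_pos (hf0 i).1 (hp i)) univ_nonempty)
  have hα_lt : α < 1 := by linarith [sum_pos (fun i _ ↦ ha_pos i) univ_nonempty]
  have hlog_le : ∑ i, log (h i) + ∑ i, log (p i) ≤ ∑ i, log (a i) := by
    rw [← sum_add_distrib]
    refine sum_le_sum fun i _ ↦ ?_
    rw [← log_mul (hh i).ne' (hp i).ne']
    exact log_le_log (mul_pos (hh i) (hp i)) (mul_le_mul_of_nonneg_right (hh_le i) (hp i).le)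
  have hamgm := sum_log_le_card_mul_log_mean univ fun i _ ↦ ha_pos i
  rw [hsum_a, card_univ, Fintype.card_fin, log_div (by linarith) (by positivity)] at hamgm
  have hbin := log_choose_add_mul_log_add_mul_log_one_sub_le hα_pos hα_lt hN
  have hmain : log (N.choose n) + ((N : ℝ) - n) * log α + ∑ i, log (h i) + ∑ i, log (p i) ≤
      -(n : ℝ) * log n := by
    linarith
  exact ⟨hmain, hmain.trans (by nlinarith [log_natCast_nonneg n])⟩
end
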